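/- If G is a 2-degenerate simple graph with maximum degree Δ(G) ≥ 2, then the strong chromatic index of G satisfies χ'_s(G) ≤ 6·Δ(G) − 7. -/
import Mathlib


/-- A strong edge coloring: any two distinct edges that are adjacent or both
adjacent to a common third edge receive distinct colors. -/
def SimpleGraph.IsStrongEdgeColoring {V : Type*} (G : SimpleGraph V)
    (C : Sym2 V → ℕ) : Prop :=
  ∀ e ∈ G.edgeSet, ∀ f ∈ G.edgeSet, e ≠ f →
    ((∃ v, v ∈ e ∧ v ∈ f) ∨
      ∃ g ∈ G.edgeSet, (∃ v, v ∈ e ∧ v ∈ g) ∧ ∃ w, w ∈ g ∧ w ∈ f) →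
    C e ≠ C f

/-- The strong chromatic index: the least number of colors in a strong edge
coloring of `G`. -/
noncomputable def SimpleGraph.strongChromaticIndex {V : Type*}
    (G : SimpleGraph V) : ℕ :=
  sInf {n | ∃ C : Sym2 V → ℕ, (∀ e ∈ G.edgeSet, C e < n) ∧
    G.IsStrongEdgeColoring C}

/-- A graph is `k`-degenerate if every (induced) subgraph on a nonempty vertex
set has a vertex of degree at most `k` in that subgraph. -/
def SimpleGraph.Degenerate {V : Type*} [Fintype V] (G : SimpleGraph V)
    [DecidableRel G.Adj] (k : ℕ) : Prop :=
  ∀ S : Finset V, S.Nonempty → ∃ v ∈ S, (S.filter (G.Adj v)).card ≤ k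

open Finset
set_option linter.unusedSectionVars false
set_option maxHeartbeats 1000000

section StrongColoringAux

section Greedy
variable {α : Type*} [DecidableEq α]

noncomputable def greedyCol (E : Finset α) (key : α → ℕ) (R : α → α → Prop)
    [DecidableRel R] (e : α) : ℕ :=
  sInf {k : ℕ |
    k ∉ (E.filter fun f => key f < key e ∧ R f e).attach.image
      (fun f => greedyCol E key R f.1)}
termination_by key e
decreasing_by
  exact (Finset.mem_filter.mp f.2).2.1

noncomputable def usedCols (E : Finset α) (key : α → ℕ) (R : α → α → Prop)
    [DecidableRel R] (e : α) : Finset ℕ :=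
  (E.filter fun f => key f < key e ∧ R f e).attach.image
      (fun f => greedyCol E key R f.1)

lemma greedyCol_eq (E : Finset α) (key : α → ℕ) (R : α → α → Prop)
    [DecidableRel R] (e : α) :
    greedyCol E key R e = sInf {k | k ∉ usedCols E key R e} := by
  rw [greedyCol]; rfl

lemma greedyCol_notMem (E : Finset α) (key : α → ℕ) (R : α → α → Prop)
    [DecidableRel R] (e : α) :
    greedyCol E key R e ∉ usedCols E key R e := by
  obtain ⟨k, hk⟩ := Infinite.exists_notMem_finset (usedCols E key R e)
  rw [greedyCol_eq]
  exact Nat.sInf_mem (⟨k, hk⟩ : Set.Nonempty {k | k ∉ usedCols E key R e})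

lemma greedyCol_le (E : Finset α) (key : α → ℕ) (R : α → α → Prop)
    [DecidableRel R] (e : α) :
    greedyCol E key R e ≤ (E.filter fun f => key f < key e ∧ R f e).card := by
  have hcard : (usedCols E key R e).card ≤ (E.filter fun f => key f < key e ∧ R f e).card := by
    refine (Finset.card_image_le).trans ?_
    simp
  have : ∃ k ∈ Finset.range ((E.filter fun f => key f < key e ∧ R f e).card + 1),
      k ∉ usedCols E key R e := by
    by_contra h
    push_neg at h
    have hsub : Finset.range ((E.filter fun f => key f < key e ∧ R f e).card + 1) ⊆ usedCols E key R e := h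
    have := Finset.card_le_card hsub
    simp at this
    omega
  obtain ⟨k, hk1, hk2⟩ := this
  rw [greedyCol_eq]
  have := Nat.sInf_le (show k ∈ {k | k ∉ usedCols E key R e} from hk2)
  simp at hk1
  omega

lemma greedyCol_ne (E : Finset α) (key : α → ℕ) (R : α → α → Prop)
    [DecidableRel R] {e f : α} (hf : f ∈ E) (hlt : key f < key e) (hR : R f e) :
    greedyCol E key R e ≠ greedyCol E key R f := by
  have hmem : greedyCol E key R f ∈ usedCols E key R e :=
    Finset.mem_image.mpr ⟨⟨f, Finset.mem_filter.mpr ⟨hf, hlt, hR⟩⟩, Finset.mem_attach _ _, rfl⟩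
  intro h
  exact greedyCol_notMem E key R e (h ▸ hmem)

end Greedy



lemma aux_order {V : Type*} [Fintype V] [DecidableEq V] (G : SimpleGraph V)
    [DecidableRel G.Adj] (hdeg : G.Degenerate 2) :
    ∀ (n : ℕ) (S : Finset V), S.card = n →
    ∃ pos : V → ℕ, Set.InjOn pos S ∧ (∀ v ∈ S, pos v < S.card) ∧
      ∀ v ∈ S, (S.filter fun w => G.Adj v w ∧ pos w < pos v).card ≤ 2 := by
  intro n
  induction n with
  | zero =>
    intro S hS
    refine ⟨fun _ => 0, ?_, ?_, ?_⟩ <;> simp_all [Finset.card_eq_zero]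
  | succ n ih =>
    intro S hS
    have hne : S.Nonempty := by
      rw [← Finset.card_pos, hS]; omega
    obtain ⟨v, hvS, hv2⟩ := hdeg S hne
    obtain ⟨pos', hinj', hlt', h2'⟩ := ih (S.erase v) (by rw [Finset.card_erase_of_mem hvS, hS]; rfl)
    set pos : V → ℕ := Function.update pos' v n with hposdef
    have hcard' : (S.erase v).card = n := by rw [Finset.card_erase_of_mem hvS, hS]; rfl
    have hposv : pos v = n := Function.update_self v n pos'
    have hposw : ∀ w ∈ S.erase v, pos w = pos' w := by
      intro w hw
      exact Function.update_of_ne (Finset.ne_of_mem_erase hw) n pos'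
    have hltw : ∀ w ∈ S.erase v, pos w < n := by
      intro w hw
      rw [hposw w hw]
      have := hlt' w hw
      omega
    refine ⟨pos, ?_, ?_, ?_⟩
    · intro x hx y hy hxy
      rcases eq_or_ne x v with hxv | hxv
      · rcases eq_or_ne y v with hyv | hyv
        · rw [hxv, hyv]
        · exfalso
          have hy' : y ∈ S.erase v := Finset.mem_erase.mpr ⟨hyv, hy⟩
          have := hltw y hy'
          rw [hxv, hposv] at hxy; omega
      · have hx' : x ∈ S.erase v := Finset.mem_erase.mpr ⟨hxv, hx⟩
        rcases eq_or_ne y v with hyv | hyv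
        · exfalso
          have := hltw x hx'
          rw [hyv, hposv] at hxy; omega
        · have hy' : y ∈ S.erase v := Finset.mem_erase.mpr ⟨hyv, hy⟩
          exact hinj' hx' hy' (by rw [← hposw x hx', ← hposw y hy']; exact hxy)
    · intro w hw
      rcases eq_or_ne w v with rfl | hwv
      · rw [hposv, hS]; omega
      · have hw' : w ∈ S.erase v := Finset.mem_erase.mpr ⟨hwv, hw⟩
        have := hltw w hw'
        omega
    · intro w hw
      rcases eq_or_ne w v with rfl | hwv
      · calc (S.filter fun w' => G.Adj w w' ∧ pos w' < pos w).card
            ≤ (S.filter (G.Adj w)).card :=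
              Finset.card_le_card (by
                intro x hx
                simp only [Finset.mem_filter] at hx ⊢
                exact ⟨hx.1, hx.2.1⟩)
          _ ≤ 2 := hv2
      · have hw' : w ∈ S.erase v := Finset.mem_erase.mpr ⟨hwv, hw⟩
        have hset : (S.filter fun w' => G.Adj w w' ∧ pos w' < pos w)
            = ((S.erase v).filter fun w' => G.Adj w w' ∧ pos' w' < pos' w) := by
          ext x
          simp only [Finset.mem_filter, Finset.mem_erase]
          constructor
          · rintro ⟨hxS, hadj, hxlt⟩
            have hxv : x ≠ v := by
              rintro rfl
              rw [hposv, hposw w hw'] at hxlt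
              have := hlt' w hw'
              omega
            have hx' : x ∈ S.erase v := Finset.mem_erase.mpr ⟨hxv, hxS⟩
            refine ⟨⟨hxv, hxS⟩, hadj, ?_⟩
            rw [← hposw x hx', ← hposw w hw']; exact hxlt
          · rintro ⟨⟨hxv, hxS⟩, hadj, hxlt⟩
            have hx' : x ∈ S.erase v := Finset.mem_erase.mpr ⟨hxv, hxS⟩
            refine ⟨hxS, hadj, ?_⟩
            rw [hposw x hx', hposw w hw']; exact hxlt
        rw [hset]
        exact h2' w hw'

lemma exists_degeneracy_order {V : Type*} [Fintype V] (G : SimpleGraph V)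
    [DecidableRel G.Adj] (hdeg : G.Degenerate 2) :
    ∃ pos : V → ℕ, Function.Injective pos ∧ (∀ v, pos v < Fintype.card V) ∧
      ∀ v, (Finset.univ.filter fun w => G.Adj v w ∧ pos w < pos v).card ≤ 2 := by
  classical
  obtain ⟨pos, hinj, hlt, h2⟩ := aux_order G hdeg (Finset.univ.card) Finset.univ rfl
  refine ⟨pos, fun x y h => hinj (Finset.mem_univ x) (Finset.mem_univ y) h, ?_, ?_⟩
  · intro v
    have := hlt v (Finset.mem_univ v)
    simpa [Finset.card_univ] using this
  · intro v
    exact h2 v (Finset.mem_univ v)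

variable {V : Type*}

lemma enc_lt {n a b c d : ℕ} (hb : b < n) (hd : d < n) :
    a * n + b < c * n + d ↔ a < c ∨ (a = c ∧ b < d) := by
  constructor
  · intro h
    by_contra hc
    push_neg at hc
    obtain ⟨h1, h2⟩ := hc
    rcases Nat.lt_or_ge c a with h3 | h3
    · have : c * n + d < a * n + b := by
        calc c * n + d < c * n + n := by omega
          _ = (c + 1) * n := by ring
          _ ≤ a * n := Nat.mul_le_mul_right n h3
          _ ≤ a * n + b := Nat.le_add_right _ _
      omega
    · have hac : a = c := le_antisymm h3 h1
      subst hac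
      have hdb := h2 rfl
      have := Nat.lt_of_add_lt_add_left h
      omega
  · rintro (h | ⟨rfl, h⟩)
    · calc a * n + b < a * n + n := by omega
        _ = (a + 1) * n := by ring
        _ ≤ c * n := Nat.mul_le_mul_right n h
        _ ≤ c * n + d := Nat.le_add_right _ _
    · omega

def ekey (pos : V → ℕ) (n : ℕ) : Sym2 V → ℕ :=
  Sym2.lift ⟨fun x y => min (pos x) (pos y) * n + max (pos x) (pos y), by
    intro x y; simp [min_comm, max_comm]⟩

lemma ekey_eval (pos : V → ℕ) (n : ℕ) {a b : V} (h : pos a ≤ pos b) :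
    ekey pos n (s(a, b)) = pos a * n + pos b := by
  simp [ekey, min_eq_left h, max_eq_right h]

lemma edge_repr {G : SimpleGraph V} {pos : V → ℕ} (hinj : Function.Injective pos)
    {e : Sym2 V} (he : e ∈ G.edgeSet) :
    ∃ a b, e = s(a, b) ∧ G.Adj a b ∧ pos a < pos b := by
  induction e with
  | _ x y =>
    have hadj : G.Adj x y := he
    have hne : pos x ≠ pos y := fun h => (G.ne_of_adj hadj) (hinj h)
    rcases Nat.lt_or_ge (pos x) (pos y) with h | h
    · exact ⟨x, y, rfl, hadj, h⟩
    · exact ⟨y, x, Sym2.eq_swap, hadj.symm, by omega⟩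

def Confl (G : SimpleGraph V) (x y : Sym2 V) : Prop :=
  (∃ v, v ∈ x ∧ v ∈ y) ∨
    ∃ g ∈ G.edgeSet, (∃ v, v ∈ x ∧ v ∈ g) ∧ ∃ w, w ∈ g ∧ w ∈ y

lemma confl_symm {G : SimpleGraph V} {x y : Sym2 V} (h : Confl G x y) : Confl G y x := by
  rcases h with ⟨w, h1, h2⟩ | ⟨g, hg, ⟨p, hp1, hp2⟩, ⟨q, hq1, hq2⟩⟩
  · exact Or.inl ⟨w, h2, h1⟩
  · exact Or.inr ⟨g, hg, ⟨q, hq2, hq1⟩, ⟨p, hp2, hp1⟩⟩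

lemma adj_of_mem_mem {G : SimpleGraph V} {g : Sym2 V} (hg : g ∈ G.edgeSet)
    {x y : V} (hx : x ∈ g) (hy : y ∈ g) (hxy : x ≠ y) : G.Adj x y := by
  have : g = s(x, y) := (Sym2.mem_and_mem_iff hxy).mp ⟨hx, hy⟩
  rw [this] at hg
  exact hg

lemma near_of_confl {G : SimpleGraph V} {u v a b : V}
    (hconf : Confl G (s(a, b)) (s(u, v))) :
    (a = u ∨ a = v ∨ G.Adj u a ∨ G.Adj v a) ∨
      (b = u ∨ b = v ∨ G.Adj u b ∨ G.Adj v b) := by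
  rcases hconf with ⟨w, hwf, hwe⟩ | ⟨g, hg, ⟨x, hxf, hxg⟩, ⟨y, hyg, hye⟩⟩
  · rw [Sym2.mem_iff] at hwf hwe
    rcases hwf with rfl | rfl
    · exact Or.inl (by tauto)
    · exact Or.inr (by tauto)
  · rw [Sym2.mem_iff] at hxf hye
    by_cases hxy : x = y
    · subst hxy
      rcases hxf with rfl | rfl
      · exact Or.inl (by tauto)
      · exact Or.inr (by tauto)
    · have hadj : G.Adj x y := adj_of_mem_mem hg hxg hyg hxy
      rcases hxf with rfl | rfl
      · refine Or.inl ?_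
        rcases hye with rfl | rfl
        · exact Or.inr (Or.inr (Or.inl hadj.symm))
        · exact Or.inr (Or.inr (Or.inr hadj.symm))
      · refine Or.inr ?_
        rcases hye with rfl | rfl
        · exact Or.inr (Or.inr (Or.inl hadj.symm))
        · exact Or.inr (Or.inr (Or.inr hadj.symm))

lemma arith_main (Δ Au Du Av Dv q' r s1 s2 s3 s4 s5 : ℕ)
    (h1 : Au + Du ≤ Δ) (h2 : Av + Dv ≤ Δ) (h3 : Du ≤ 2) (h4 : Dv ≤ 2)
    (h5 : 1 + q' + r ≤ Dv) (h6 : 1 ≤ Au) (h7 : 2 ≤ Δ)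
    (hs1 : s1 ≤ Au - 1) (hs2 : s2 ≤ (Du + q') * Δ) (hs3 : s3 ≤ Au - 1)
    (hs4 : s4 ≤ Av) (hs5 : s5 ≤ 2 * r) :
    s1 + s2 + s3 + s4 + s5 + 8 ≤ 6 * Δ := by
  have hq : q' ≤ 1 := by omega
  interval_cases Du <;> interval_cases q' <;> omega

lemma conflict_card_le [Fintype V] [DecidableEq V] (G : SimpleGraph V)
    [DecidableRel G.Adj] [DecidableRel (Confl G)]
    (pos : V → ℕ) (hinj : Function.Injective pos)
    (hn : ∀ x, pos x < Fintype.card V)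
    (h2 : ∀ x, (univ.filter fun w => G.Adj x w ∧ pos w < pos x).card ≤ 2)
    (hΔ : 2 ≤ G.maxDegree)
    {e : Sym2 V} (he : e ∈ G.edgeFinset) :
    (G.edgeFinset.filter fun f =>
        ekey pos (Fintype.card V) f < ekey pos (Fintype.card V) e ∧ Confl G f e).card + 8
      ≤ 6 * G.maxDegree := by
  set n := Fintype.card V with hndef
  obtain ⟨u, v, heq, huv, hposuv⟩ := edge_repr hinj (SimpleGraph.mem_edgeFinset.mp he)
  set D : V → Finset V := fun x => univ.filter (fun w => G.Adj x w ∧ pos w < pos x) with hD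
  set U : V → Finset V := fun x => univ.filter (fun w => G.Adj x w ∧ pos x < pos w) with hU
  have hD2 : ∀ x, (D x).card ≤ 2 := fun x => h2 x
  have hmemD : ∀ x w, w ∈ D x ↔ G.Adj x w ∧ pos w < pos x := by
    intro x w; rw [hD]; simp
  have hmemU : ∀ x w, w ∈ U x ↔ G.Adj x w ∧ pos x < pos w := by
    intro x w; rw [hU]; simp
  have hUD : ∀ x, (U x).card + (D x).card ≤ G.maxDegree := by
    intro x
    have hunion : U x ∪ D x = G.neighborFinset x := by
      ext w
      rw [Finset.mem_union, hmemU, hmemD, SimpleGraph.mem_neighborFinset]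
      constructor
      · rintro (⟨h, _⟩ | ⟨h, _⟩) <;> exact h
      · intro h
        have hne : pos x ≠ pos w := fun hh => (G.ne_of_adj h) (hinj hh)
        rcases Nat.lt_or_ge (pos x) (pos w) with hlt | hge
        · exact Or.inl ⟨h, hlt⟩
        · exact Or.inr ⟨h, by omega⟩
    have hdisj : Disjoint (U x) (D x) := by
      rw [Finset.disjoint_left]
      intro w hw1 hw2
      rw [hmemU] at hw1
      rw [hmemD] at hw2
      omega
    calc (U x).card + (D x).card = (U x ∪ D x).card := (Finset.card_union_of_disjoint hdisj).symm
      _ = G.degree x := by rw [hunion]; rfl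
      _ ≤ G.maxDegree := G.degree_le_maxDegree x
  have hvUu : v ∈ U u := (hmemU u v).mpr ⟨huv, hposuv⟩
  have huDv : u ∈ D v := (hmemD v u).mpr ⟨huv.symm, hposuv⟩
  set K : Finset V := (G.neighborFinset u ∪ G.neighborFinset v).filter
    (fun c => pos c < pos u) with hK
  set Kv : Finset V := (D v).filter (fun c => pos c < pos u) with hKv
  set Rv : Finset V := (D v).filter (fun b => pos u < pos b) with hRv
  set S1 := ((U u).erase v).image (fun b => s(u, b)) with hS1
  set S2 := K.biUnion (fun c => G.incidenceFinset c) with hS2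
  set S3 := ((U u).erase v).biUnion (fun b => ((D b).erase u).image (fun a => s(a, b))) with hS3
  set S4 := (U v).biUnion (fun b => ((D b).erase v).image (fun a => s(a, b))) with hS4
  set S5 := Rv.biUnion (fun b => (D b).image (fun a => s(a, b))) with hS5
  -- coverage
  have hcov : (G.edgeFinset.filter fun f => ekey pos n f < ekey pos n e ∧ Confl G f e)
      ⊆ S1 ∪ S2 ∪ S3 ∪ S4 ∪ S5 := by
    intro f hf
    rw [Finset.mem_filter] at hf
    obtain ⟨hfE, hklt, hconf⟩ := hf
    have hfEs : f ∈ G.edgeSet := SimpleGraph.mem_edgeFinset.mp hfE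
    obtain ⟨a, b, hfeq, hab, hpab⟩ := edge_repr hinj hfEs
    rw [heq] at hconf hklt
    rw [hfeq] at hconf hklt hfEs ⊢
    rw [ekey_eval pos n (le_of_lt hpab), ekey_eval pos n (le_of_lt hposuv),
      enc_lt (hn b) (hn v)] at hklt
    have hnear := near_of_confl hconf
    simp only [Finset.mem_union]
    rcases hklt with hlt1 | ⟨heqau, hlt2⟩
    · -- pos a < pos u
      by_cases hmemK : a ∈ K ∨ b ∈ K
      · refine Or.inl (Or.inl (Or.inl (Or.inr ?_)))
        rcases hmemK with h | h
        · refine Finset.mem_biUnion.mpr ⟨a, h, ?_⟩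
          rw [SimpleGraph.mem_incidenceFinset]
          exact ⟨hfEs, Sym2.mem_mk_left a b⟩
        · refine Finset.mem_biUnion.mpr ⟨b, h, ?_⟩
          rw [SimpleGraph.mem_incidenceFinset]
          exact ⟨hfEs, Sym2.mem_mk_right a b⟩
      · push_neg at hmemK
        obtain ⟨haK, hbK⟩ := hmemK
        have hanotnear : ¬(a = u ∨ a = v ∨ G.Adj u a ∨ G.Adj v a) := by
          rintro (rfl | rfl | hadj | hadj)
          · omega
          · omega
          · exact haK (Finset.mem_filter.mpr ⟨Finset.mem_union_left _
              ((SimpleGraph.mem_neighborFinset _ _ _).mpr hadj), hlt1⟩)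
          · exact haK (Finset.mem_filter.mpr ⟨Finset.mem_union_right _
              ((SimpleGraph.mem_neighborFinset _ _ _).mpr hadj), hlt1⟩)
        have hnearb := hnear.resolve_left hanotnear
        have hbu : b ≠ u := by
          rintro rfl
          exact haK (Finset.mem_filter.mpr ⟨Finset.mem_union_left _
            ((SimpleGraph.mem_neighborFinset _ _ _).mpr hab.symm), hlt1⟩)
        have hbv : b ≠ v := by
          rintro rfl
          exact haK (Finset.mem_filter.mpr ⟨Finset.mem_union_right _
            ((SimpleGraph.mem_neighborFinset _ _ _).mpr hab.symm), hlt1⟩)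
        have hau : a ≠ u := fun hh => by rw [hh] at hlt1; omega
        rcases hnearb with hh | hh | hadjub | hadjvb
        · exact absurd hh hbu
        · exact absurd hh hbv
        · -- S3
          have hnb : ¬ pos b < pos u := fun hh => hbK (Finset.mem_filter.mpr
            ⟨Finset.mem_union_left _ ((SimpleGraph.mem_neighborFinset _ _ _).mpr hadjub), hh⟩)
          have hposub : pos u < pos b := by
            have : pos u ≠ pos b := fun hh => hbu (hinj hh.symm)
            omega
          refine Or.inl (Or.inl (Or.inr ?_))
          refine Finset.mem_biUnion.mpr ⟨b, Finset.mem_erase.mpr ⟨hbv,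
            (hmemU u b).mpr ⟨hadjub, hposub⟩⟩, ?_⟩
          exact Finset.mem_image.mpr ⟨a, Finset.mem_erase.mpr ⟨hau,
            (hmemD b a).mpr ⟨hab.symm, hpab⟩⟩, rfl⟩
        · have hnb : ¬ pos b < pos u := fun hh => hbK (Finset.mem_filter.mpr
            ⟨Finset.mem_union_right _ ((SimpleGraph.mem_neighborFinset _ _ _).mpr hadjvb), hh⟩)
          have hbvne : pos b ≠ pos v := fun hh => hbv (hinj hh)
          rcases Nat.lt_or_ge (pos v) (pos b) with hvb | hvb
          · -- S4
            refine Or.inl (Or.inr ?_)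
            refine Finset.mem_biUnion.mpr ⟨b, (hmemU v b).mpr ⟨hadjvb, hvb⟩, ?_⟩
            have hav : a ≠ v := fun hh => by rw [hh] at hlt1; omega
            exact Finset.mem_image.mpr ⟨a, Finset.mem_erase.mpr ⟨hav,
              (hmemD b a).mpr ⟨hab.symm, hpab⟩⟩, rfl⟩
          · -- S5
            have hbltv : pos b < pos v := by omega
            have hposub : pos u < pos b := by
              have : pos u ≠ pos b := fun hh => hbu (hinj hh.symm)
              omega
            refine Or.inr ?_
            refine Finset.mem_biUnion.mpr ⟨b, Finset.mem_filter.mpr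
              ⟨(hmemD v b).mpr ⟨hadjvb, hbltv⟩, hposub⟩, ?_⟩
            exact Finset.mem_image.mpr ⟨a, (hmemD b a).mpr ⟨hab.symm, hpab⟩, rfl⟩
    · -- a = u
      have hau : a = u := hinj heqau
      subst hau
      refine Or.inl (Or.inl (Or.inl (Or.inl ?_)))
      have hbv : b ≠ v := fun hh => by rw [hh] at hlt2; omega
      exact Finset.mem_image.mpr ⟨b, Finset.mem_erase.mpr ⟨hbv,
        (hmemU a b).mpr ⟨hab, hpab⟩⟩, rfl⟩
  -- card bounds
  have hs1 : S1.card ≤ (U u).card - 1 := by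
    refine Finset.card_image_le.trans ?_
    rw [Finset.card_erase_of_mem hvUu]
  have hs2 : S2.card ≤ K.card * G.maxDegree := by
    refine Finset.card_biUnion_le.trans ?_
    refine (Finset.sum_le_card_nsmul K _ G.maxDegree ?_).trans (by rw [smul_eq_mul])
    intro c _
    rw [SimpleGraph.card_incidenceFinset_eq_degree]
    exact G.degree_le_maxDegree c
  have hKle : K.card ≤ (D u).card + Kv.card := by
    refine (Finset.card_le_card ?_).trans (Finset.card_union_le _ _)
    intro c hc
    rw [hK, Finset.mem_filter, Finset.mem_union, SimpleGraph.mem_neighborFinset,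
      SimpleGraph.mem_neighborFinset] at hc
    obtain ⟨hc1 | hc1, hc2⟩ := hc
    · exact Finset.mem_union_left _ ((hmemD u c).mpr ⟨hc1, hc2⟩)
    · exact Finset.mem_union_right _ (Finset.mem_filter.mpr
        ⟨(hmemD v c).mpr ⟨hc1, by omega⟩, hc2⟩)
  have hone : ∀ (b x : V), x ∈ D b → ((D b).erase x).card ≤ 1 := by
    intro b x hx
    rw [Finset.card_erase_of_mem hx]
    have := hD2 b
    omega
  have hs3 : S3.card ≤ (U u).card - 1 := by
    refine Finset.card_biUnion_le.trans ?_
    calc ∑ b ∈ (U u).erase v, (((D b).erase u).image (fun a => s(a, b))).card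
        ≤ ∑ _b ∈ (U u).erase v, 1 := by
          refine Finset.sum_le_sum ?_
          intro b hb
          refine Finset.card_image_le.trans ?_
          have hbUu : b ∈ U u := Finset.mem_of_mem_erase hb
          rw [hmemU] at hbUu
          exact hone b u ((hmemD b u).mpr ⟨hbUu.1.symm, hbUu.2⟩)
      _ = ((U u).erase v).card := by simp
      _ = (U u).card - 1 := Finset.card_erase_of_mem hvUu
  have hs4 : S4.card ≤ (U v).card := by
    refine Finset.card_biUnion_le.trans ?_
    calc ∑ b ∈ U v, (((D b).erase v).image (fun a => s(a, b))).card
        ≤ ∑ _b ∈ U v, 1 := by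
          refine Finset.sum_le_sum ?_
          intro b hb
          refine Finset.card_image_le.trans ?_
          rw [hmemU] at hb
          exact hone b v ((hmemD b v).mpr ⟨hb.1.symm, hb.2⟩)
      _ = (U v).card := by simp
  have hs5 : S5.card ≤ 2 * Rv.card := by
    refine Finset.card_biUnion_le.trans ?_
    calc ∑ b ∈ Rv, ((D b).image (fun a => s(a, b))).card
        ≤ ∑ _b ∈ Rv, 2 := by
          refine Finset.sum_le_sum ?_
          intro b _
          exact Finset.card_image_le.trans (hD2 b)
      _ = 2 * Rv.card := by rw [Finset.sum_const, smul_eq_mul, mul_comm]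
  have hqr : 1 + Kv.card + Rv.card ≤ (D v).card := by
    have hdisj : Disjoint Kv Rv := by
      rw [Finset.disjoint_left]
      intro c h1 h2
      rw [hKv, Finset.mem_filter] at h1
      rw [hRv, Finset.mem_filter] at h2
      omega
    have hu_not : u ∉ Kv ∪ Rv := by
      simp only [Finset.mem_union, hKv, hRv, Finset.mem_filter]
      rintro (⟨_, hh⟩ | ⟨_, hh⟩) <;> omega
    have hsub : insert u (Kv ∪ Rv) ⊆ D v := by
      intro c hc
      rcases Finset.mem_insert.mp hc with rfl | hc
      · exact huDv
      · rcases Finset.mem_union.mp hc with hc | hc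
        · exact Finset.mem_of_mem_filter c hc
        · exact Finset.mem_of_mem_filter c hc
    calc 1 + Kv.card + Rv.card = (insert u (Kv ∪ Rv)).card := by
          rw [Finset.card_insert_of_notMem hu_not, Finset.card_union_of_disjoint hdisj]
          ring
      _ ≤ (D v).card := Finset.card_le_card hsub
  have hAu1 : 1 ≤ (U u).card := Finset.card_pos.mpr ⟨v, hvUu⟩
  have hs2' : S2.card ≤ ((D u).card + Kv.card) * G.maxDegree :=
    hs2.trans (Nat.mul_le_mul_right _ hKle)
  have hmain := arith_main G.maxDegree (U u).card (D u).card (U v).card (D v).card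
    Kv.card Rv.card S1.card S2.card S3.card S4.card S5.card
    (hUD u) (hUD v) (hD2 u) (hD2 v) hqr hAu1 hΔ hs1 hs2' hs3 hs4 hs5
  have hucard : (S1 ∪ S2 ∪ S3 ∪ S4 ∪ S5).card
      ≤ S1.card + S2.card + S3.card + S4.card + S5.card := by
    calc (S1 ∪ S2 ∪ S3 ∪ S4 ∪ S5).card
        ≤ (S1 ∪ S2 ∪ S3 ∪ S4).card + S5.card := Finset.card_union_le _ _
      _ ≤ ((S1 ∪ S2 ∪ S3).card + S4.card) + S5.card := by
          exact Nat.add_le_add_right (Finset.card_union_le _ _) _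
      _ ≤ (((S1 ∪ S2).card + S3.card) + S4.card) + S5.card := by
          exact Nat.add_le_add_right (Nat.add_le_add_right (Finset.card_union_le _ _) _) _
      _ ≤ ((((S1.card + S2.card) + S3.card) + S4.card) + S5.card) := by
          exact Nat.add_le_add_right (Nat.add_le_add_right
            (Nat.add_le_add_right (Finset.card_union_le _ _) _) _) _
  calc (G.edgeFinset.filter fun f => ekey pos n f < ekey pos n e ∧ Confl G f e).card + 8
      ≤ (S1 ∪ S2 ∪ S3 ∪ S4 ∪ S5).card + 8 := Nat.add_le_add_right (Finset.card_le_card hcov) 8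
    _ ≤ S1.card + S2.card + S3.card + S4.card + S5.card + 8 := Nat.add_le_add_right hucard 8
    _ ≤ 6 * G.maxDegree := hmain

end StrongColoringAux

theorem strong_chromatic_index_of_two_degenerate {V : Type*} [Fintype V]
    (G : SimpleGraph V) [DecidableRel G.Adj]
    (hdeg : G.Degenerate 2) (hΔ : 2 ≤ G.maxDegree) :
    G.strongChromaticIndex ≤ 6 * G.maxDegree - 7 := by
  classical
  obtain ⟨pos, hinj, hn, h2⟩ := exists_degeneracy_order G hdeg
  have hkeyinj : ∀ e ∈ G.edgeFinset, ∀ f ∈ G.edgeFinset,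
      ekey pos (Fintype.card V) e = ekey pos (Fintype.card V) f → e = f := by
    intro e he f hf hkey
    obtain ⟨a, b, heq, hab, hpab⟩ := edge_repr hinj (SimpleGraph.mem_edgeFinset.mp he)
    obtain ⟨c, d, heq', hcd, hpcd⟩ := edge_repr hinj (SimpleGraph.mem_edgeFinset.mp hf)
    rw [heq, heq'] at hkey ⊢
    rw [ekey_eval pos _ (le_of_lt hpab), ekey_eval pos _ (le_of_lt hpcd)] at hkey
    have h1 : ¬ (pos a * Fintype.card V + pos b < pos c * Fintype.card V + pos d) := by omega
    have h2' : ¬ (pos c * Fintype.card V + pos d < pos a * Fintype.card V + pos b) := by omega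
    rw [enc_lt (hn b) (hn d)] at h1
    rw [enc_lt (hn d) (hn b)] at h2'
    push_neg at h1 h2'
    have hac : pos a = pos c := by
      have := h1.1
      have := h2'.1
      omega
    have hbd : pos b = pos d := by
      have := h1.2 hac
      have := h2'.2 hac.symm
      omega
    rw [hinj hac, hinj hbd]
  set C := greedyCol G.edgeFinset (ekey pos (Fintype.card V)) (Confl G) with hC
  have hmem : 6 * G.maxDegree - 7 ∈ {m | ∃ C : Sym2 V → ℕ,
      (∀ e ∈ G.edgeSet, C e < m) ∧ G.IsStrongEdgeColoring C} := by
    refine ⟨C, ?_, ?_⟩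
    · intro e he
      have hle := greedyCol_le G.edgeFinset (ekey pos (Fintype.card V)) (Confl G) e
      have hcnt := conflict_card_le G pos hinj hn h2 hΔ
        (SimpleGraph.mem_edgeFinset.mpr he)
      rw [← hC] at hle
      omega
    · intro e he f hf hne hcf
      have hconf : Confl G e f := hcf
      have hkey : ekey pos (Fintype.card V) e ≠ ekey pos (Fintype.card V) f := fun h =>
        hne (hkeyinj e (SimpleGraph.mem_edgeFinset.mpr he) f (SimpleGraph.mem_edgeFinset.mpr hf) h)
      rcases Nat.lt_or_ge (ekey pos (Fintype.card V) f) (ekey pos (Fintype.card V) e)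
        with hlt | hge
      · exact greedyCol_ne G.edgeFinset (ekey pos (Fintype.card V)) (Confl G)
          (SimpleGraph.mem_edgeFinset.mpr hf) hlt (confl_symm hconf)
      · have hlt : ekey pos (Fintype.card V) e < ekey pos (Fintype.card V) f := by omega
        exact (greedyCol_ne G.edgeFinset (ekey pos (Fintype.card V)) (Confl G)
          (SimpleGraph.mem_edgeFinset.mpr he) hlt hconf).symm
  exact Nat.sInf_le hmem
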